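/- Let p, q, r be probability distributions on Fin 2 with q 0 > 0 and q 1 > 0. If p 0 * r 0 / q 0 + p 1 * r 1 / q 1 = 1, then either (q 0 = p 0 and q 1 = p 1) or (q 0 = r 0 and q 1 = r 1). -/

import Mathlib

/-! Clearing denominators, the hypothesis says `p₀ r₀ q₁ + p₁ r₁ q₀ = q₀ q₁`. Since all three
vectors sum to one, the difference of the two sides factors as
`(r₀ q₁ - r₁ q₀) (p₀ q₁ - p₁ q₀)`, and a cross difference `a₀ b₁ - a₁ b₀` of two vectors summing
to one is `a₀ - b₀`, so it vanishes only when the vectors agree. -/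

section CommRing

variable {R : Type*} [CommRing R]

theorem cross_sub_eq_sub_of_add_eq_one {a b : Fin 2 → R} (ha : a 0 + a 1 = 1)
    (hb : b 0 + b 1 = 1) : a 0 * b 1 - a 1 * b 0 = a 0 - b 0 := by
  linear_combination (-b 0) * ha + a 0 * hb

theorem eq_of_cross_sub_eq_zero {a b : Fin 2 → R} (ha : a 0 + a 1 = 1) (hb : b 0 + b 1 = 1)
    (h : a 0 * b 1 - a 1 * b 0 = 0) : b 0 = a 0 ∧ b 1 = a 1 := by
  have h₀ : b 0 = a 0 := by
    rw [cross_sub_eq_sub_of_add_eq_one ha hb] at h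
    exact (sub_eq_zero.mp h).symm
  refine ⟨h₀, ?_⟩
  linear_combination hb - ha - h₀

theorem cross_sub_mul_cross_sub_of_add_eq_one {p q r : Fin 2 → R} (hp : p 0 + p 1 = 1)
    (hq : q 0 + q 1 = 1) (hr : r 0 + r 1 = 1) :
    (r 0 * q 1 - r 1 * q 0) * (p 0 * q 1 - p 1 * q 0) =
      p 0 * r 0 * q 1 + p 1 * r 1 * q 0 - q 0 * q 1 := by
  linear_combination (p 0 * r 0 * q 1 + p 1 * r 1 * q 0) * hq
    - q 0 * q 1 * (r 0 + r 1) * hp - q 0 * q 1 * hr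

end CommRing

theorem three_distributions_sum_one_dim_two_general
    (p q r : Fin 2 → ℝ)
    (hp1 : p 0 + p 1 = 1)
    (hq1 : q 0 + q 1 = 1)
    (hr1 : r 0 + r 1 = 1)
    (hq0pos : 0 < q 0) (hq1pos : 0 < q 1)
    (hsum : p 0 * r 0 / q 0 + p 1 * r 1 / q 1 = 1) :
    (q 0 = p 0 ∧ q 1 = p 1) ∨ (q 0 = r 0 ∧ q 1 = r 1) := by
  have hcleared : p 0 * r 0 * q 1 + p 1 * r 1 * q 0 = q 0 * q 1 := by
    field_simp at hsum
    linarith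
  have hfactor : (r 0 * q 1 - r 1 * q 0) * (p 0 * q 1 - p 1 * q 0) = 0 := by
    rw [cross_sub_mul_cross_sub_of_add_eq_one hp1 hq1 hr1, hcleared, sub_self]
  rcases mul_eq_zero.mp hfactor with hr | hp
  · exact Or.inr (eq_of_cross_sub_eq_zero hr1 hq1 hr)
  · exact Or.inl (eq_of_cross_sub_eq_zero hp1 hq1 hp)

/-- Two-dimensional case of the supplement lemma. -/
theorem three_distributions_sum_one_dim_two
    (p q r : Fin 2 → ℝ)
    (hp0 : ∀ i, 0 ≤ p i) (hp1 : p 0 + p 1 = 1)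
    (hq0 : ∀ i, 0 ≤ q i) (hq1 : q 0 + q 1 = 1)
    (hr0 : ∀ i, 0 ≤ r i) (hr1 : r 0 + r 1 = 1)
    (hq0pos : 0 < q 0) (hq1pos : 0 < q 1)
    (hsum : p 0 * r 0 / q 0 + p 1 * r 1 / q 1 = 1) :
    (q 0 = p 0 ∧ q 1 = p 1) ∨ (q 0 = r 0 ∧ q 1 = r 1) :=
  three_distributions_sum_one_dim_two_general p q r hp1 hq1 hr1 hq0pos hq1pos hsum
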